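/- A monomial ideal I ⊆ K[x_1,...,x_n] generated in degree d is d-linear lexsegment if and only if its image Φ(I) ⊆ K[x_1,...,x_{n+d-1}] under the squarefree operation is d-linear squarefree lexsegment. -/

import Mathlib

set_option synthInstance.maxHeartbeats 1000000
set_option maxHeartbeats 1000000

open MvPolynomial

namespace Paper

/-! ### Combinatorics of monomials -/

/-- a monomial in `n` variables, encoded by its exponent vector -/
abbrev Mono (n : ℕ) := Fin n →₀ ℕ

/-- total degree of a monomial -/
def mdeg {n : ℕ} (u : Mono n) : ℕ := u.sum fun _ e => e

/-- `maxVar u` is the largest index (1-indexed) of a variable dividing `u`; `maxVar 1 = 0`. -/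
def maxVar {n : ℕ} (u : Mono n) : ℕ := u.support.sup fun i => (i : ℕ) + 1

/-- `LexGT u v` : `u >_lex v` (lexicographic order with `x_1 > x_2 > ⋯ > x_n`). -/
def LexGT {n : ℕ} (u v : Mono n) : Prop :=
  ∃ i : Fin n, v i < u i ∧ ∀ j : Fin n, j < i → u j = v j

/-- strongly stable set of monomials -/
def SStableSet {n : ℕ} (V : Set (Mono n)) : Prop :=
  ∀ u : Mono n, ∀ p q : Fin n, p < q → u + Finsupp.single q 1 ∈ V →
    u + Finsupp.single p 1 ∈ V

/-- `Dk V k = { u / x_k : u ∈ V, max(u) = k }` (here `k : Fin n` is the 0-indexed variable,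
corresponding to the 1-indexed variable `k+1`) -/
def Dk {n : ℕ} (V : Set (Mono n)) (k : Fin n) : Set (Mono n) :=
  {w | w + Finsupp.single k 1 ∈ V ∧ maxVar (w + Finsupp.single k 1) = (k : ℕ) + 1}

/-- `Mle j W = { u ∈ W : max(u) ≤ j }` -/
def Mle {n : ℕ} (j : ℕ) (W : Set (Mono n)) : Set (Mono n) := {u ∈ W | maxVar u ≤ j}

/-- `L` is a lexsegment set of monomials inside `K[x_1,…,x_k]`. -/
def LexSegIn {n : ℕ} (k : ℕ) (L : Set (Mono n)) : Prop :=
  (∀ u ∈ L, maxVar u ≤ k) ∧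
  ∀ u ∈ L, ∀ v : Mono n, mdeg v = mdeg u → maxVar v ≤ k → LexGT v u → v ∈ L

/-- `V` is a `d`-linear lexsegment set of monomials of degree `d`. -/
def DLinearLexSeg {n : ℕ} (d : ℕ) (V : Set (Mono n)) : Prop :=
  (∀ u ∈ V, mdeg u = d) ∧ SStableSet V ∧
    ∀ k : Fin n, LexSegIn ((k : ℕ) + 1) (Dk V k)

/-! ### Ideal-level notions -/

variable {n : ℕ} {K : Type} [Field K]

/-- `I` is a monomial ideal. -/
def MonomialIdeal (I : Ideal (MvPolynomial (Fin n) K)) : Prop :=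
  ∀ p ∈ I, ∀ m ∈ p.support, (monomial m (1 : K)) ∈ I

/-- `u` is a minimal monomial generator of the monomial ideal `I`. -/
def MinGen (I : Ideal (MvPolynomial (Fin n) K)) (u : Mono n) : Prop :=
  monomial u (1 : K) ∈ I ∧ ∀ v : Mono n, v ≤ u → v ≠ u → monomial v (1 : K) ∉ I

/-- stable monomial ideal -/
def StableIdeal (I : Ideal (MvPolynomial (Fin n) K)) : Prop :=
  MonomialIdeal I ∧
  ∀ u : Mono n, ∀ q : Fin n, maxVar u = (q : ℕ) + 1 → monomial u (1 : K) ∈ I →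
    ∀ p : Fin n, p < q →
      monomial (u - Finsupp.single q 1 + Finsupp.single p 1) (1 : K) ∈ I

/-- strongly stable monomial ideal -/
def SStableIdeal (I : Ideal (MvPolynomial (Fin n) K)) : Prop :=
  MonomialIdeal I ∧
  ∀ u : Mono n, ∀ q : Fin n, 0 < u q → monomial u (1 : K) ∈ I →
    ∀ p : Fin n, p < q →
      monomial (u - Finsupp.single q 1 + Finsupp.single p 1) (1 : K) ∈ I

/-- the set of (exponent vectors of) monomials of degree `k` lying in `I` -/
def monSlice (I : Ideal (MvPolynomial (Fin n) K)) (k : ℕ) : Set (Mono n) :=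
  {u | mdeg u = k ∧ monomial u (1 : K) ∈ I}

/-- homogeneous (graded) ideal -/
def HomIdeal (I : Ideal (MvPolynomial (Fin n) K)) : Prop :=
  ∀ p ∈ I, ∀ k : ℕ, homogeneousComponent k p ∈ I

/-! ### Graded components and Hilbert functions -/

/-- the degree-`z` homogeneous component of `I`, as a `K`-subspace -/
noncomputable def hComp (I : Ideal (MvPolynomial (Fin n) K)) (z : ℤ) :
    Submodule K (MvPolynomial (Fin n) K) :=
  if 0 ≤ z then
    (Submodule.restrictScalars K I) ⊓ homogeneousSubmodule (Fin n) K z.toNat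
  else ⊥

/-- Hilbert function `H(I,t)` of the ideal `I` -/
noncomputable def hfI (I : Ideal (MvPolynomial (Fin n) K)) (t : ℕ) : ℕ :=
  Module.finrank K (hComp I (t : ℤ))

/-- Hilbert function `H(S/I,t)` of the quotient `S/I` -/
noncomputable def hfQ (I : Ideal (MvPolynomial (Fin n) K)) (t : ℕ) : ℕ :=
  Module.finrank K
    (homogeneousSubmodule (Fin n) K t ⧸
      Submodule.comap (homogeneousSubmodule (Fin n) K t).subtype
        (Submodule.restrictScalars K I))

/-- squarefree exponent vector -/
def SqFree {n : ℕ} (u : Mono n) : Prop := ∀ i, u i ≤ 1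

/-- squarefree monomial ideal -/
def SqMonomialIdeal (I : Ideal (MvPolynomial (Fin n) K)) : Prop :=
  MonomialIdeal I ∧ ∀ u : Mono n, MinGen I u → SqFree u

/-- squarefree strongly stable ideal -/
def SqSStableIdeal (I : Ideal (MvPolynomial (Fin n) K)) : Prop :=
  SqMonomialIdeal I ∧
  ∀ u : Mono n, SqFree u → monomial u (1 : K) ∈ I →
    ∀ p q : Fin n, p < q → u q = 1 → u p = 0 →
      monomial (u - Finsupp.single q 1 + Finsupp.single p 1) (1 : K) ∈ I

/-- `PhiRel u w` : `w = Φ(u)` where `Φ` is the squarefree operation sending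
`x_{i_1}x_{i_2}⋯x_{i_d}` (with `i_1 ≤ ⋯ ≤ i_d`) to `x_{i_1}x_{i_2+1}⋯x_{i_d+d-1}`
(indices written 0-indexed below). -/
def PhiRel {n d : ℕ} (u : Mono n) (w : Mono (n + d - 1)) : Prop :=
  ∃ l : List ℕ, l.Chain' (· ≤ ·) ∧ l.length = d ∧ (∀ m ∈ l, m < n) ∧
    (∀ i : Fin n, u i = l.count (i : ℕ)) ∧
    (∀ i : Fin (n + d - 1),
      w i = (l.zipIdx.filter fun p => decide (p.2 + p.1 = (i : ℕ))).length)

/-- `d`-linear lexsegment ideal: generated by a `d`-linear lexsegment set of monomials of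
degree `d` -/
def DLinearLexIdeal (d : ℕ) (I : Ideal (MvPolynomial (Fin n) K)) : Prop :=
  MonomialIdeal I ∧ (∀ u : Mono n, MinGen I u → mdeg u = d) ∧
    DLinearLexSeg d (monSlice I d)

/-- `L` is a squarefree lexsegment set of monomials inside `K[x_1,…,x_k]` -/
def SqLexSegIn {n : ℕ} (k : ℕ) (L : Set (Mono n)) : Prop :=
  (∀ u ∈ L, SqFree u ∧ maxVar u ≤ k) ∧
  ∀ u ∈ L, ∀ v : Mono n, SqFree v → mdeg v = mdeg u → maxVar v ≤ k → LexGT v u → v ∈ L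

/-- `d`-linear squarefree lexsegment ideal: generated in degree `d`, squarefree strongly
stable, and each `D_k` of the generating set is squarefree lexsegment in
`K[x_1,…,x_{k-1}]`. -/
def DLinearSqLexIdeal (d : ℕ) (I : Ideal (MvPolynomial (Fin n) K)) : Prop :=
  SqSStableIdeal I ∧ (∀ u : Mono n, MinGen I u → mdeg u = d) ∧
    ∀ k : Fin n, SqLexSegIn ((k : ℕ)) (Dk (monSlice I d) k)

/-!
Write a monomial `u` of degree `d` as `x_{i_0} ⋯ x_{i_{d-1}}` with `i_0 ≤ ⋯ ≤ i_{d-1}`; then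
`Φ(u)` has the strictly increasing variables `i_t + t`. Lexicographic comparison of monomials is
(reversed) lexicographic comparison of these sorted index lists, and `i_t ↦ i_t + t` does not move
the first position where two such lists differ, so `Φ` preserves the lex order. Moreover
`max Φ(u) = max u + d - 1`, and every squarefree monomial of degree `d` is a `Φ(u)` (subtract `t`
from its `t`-th index). Hence `Φ` maps `{u ∈ V : max u = k}` onto
`{w ∈ Φ(V) : max w = k + d - 1}` preserving lex order, which transports the lexsegment conditions.

Strong stability (squarefree or not) only needs to be checked on exchanges `x_{q-1}/x_q`. Moving the
first occurrence of `q`, at position `t`, in `u` to `q - 1` is exactly the exchange `x_{j-1}/x_j`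
for `j = t + q` in `Φ(u)`, and `x_{j-1}` does not divide `Φ(u)`; conversely, every such squarefree
exchange in `Φ(u)` arises in this way.
-/

section Monomials

variable {N : ℕ}

lemma mdeg_eq_sum (u : Mono N) : mdeg u = ∑ i, u i :=
  Finsupp.degree_eq_sum u

lemma mdeg_add (u v : Mono N) : mdeg (u + v) = mdeg u + mdeg v :=
  map_add Finsupp.degree u v

lemma mdeg_single (q : Fin N) : mdeg (Finsupp.single q 1) = 1 :=
  Finsupp.degree_single q 1

lemma mdeg_le_of_le {u v : Mono N} (h : v ≤ u) : mdeg v ≤ mdeg u :=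
  Finsupp.degree_mono h

lemma mdeg_lt_of_lt {u v : Mono N} (h : v < u) : mdeg v < mdeg u := by
  obtain ⟨hle, i, hi⟩ := Finsupp.lt_def.1 h
  rw [mdeg_eq_sum, mdeg_eq_sum]
  exact Finset.sum_lt_sum (fun j _ => hle j) ⟨i, Finset.mem_univ i, hi⟩

lemma eq_of_le_of_mdeg_le {u v : Mono N} (h : v ≤ u) (hd : mdeg u ≤ mdeg v) : v = u :=
  by_contra fun hne => (mdeg_lt_of_lt (lt_of_le_of_ne h hne)).not_ge hd

lemma maxVar_le_iff {u : Mono N} {k : ℕ} :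
    maxVar u ≤ k ↔ ∀ i : Fin N, u i ≠ 0 → (i : ℕ) + 1 ≤ k := by
  simp only [maxVar, Finset.sup_le_iff, Finsupp.mem_support_iff]

lemma le_maxVar {u : Mono N} {i : Fin N} (hi : u i ≠ 0) : (i : ℕ) + 1 ≤ maxVar u :=
  Finset.le_sup (f := fun i : Fin N => (i : ℕ) + 1) (Finsupp.mem_support_iff.2 hi)

lemma maxVar_le (u : Mono N) : maxVar u ≤ N :=
  maxVar_le_iff.2 fun i _ => i.2

lemma one_le_maxVar {u : Mono N} (h : mdeg u ≠ 0) : 1 ≤ maxVar u := by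
  obtain ⟨i, hi⟩ : ∃ i, u i ≠ 0 := by
    by_contra! h'
    exact h (by rw [mdeg_eq_sum]; exact Finset.sum_eq_zero fun i _ => h' i)
  exact (Nat.le_add_left 1 i).trans (le_maxVar hi)

lemma apply_ne_zero_of_maxVar_eq {u : Mono N} {k : Fin N} (h : maxVar u = (k : ℕ) + 1) :
    u k ≠ 0 := by
  have hne : u.support.Nonempty := by
    by_contra h'
    rw [Finset.not_nonempty_iff_eq_empty] at h'
    simp [maxVar, h'] at h
  obtain ⟨i, hi, hs⟩ := Finset.exists_mem_eq_sup u.support hne (fun i : Fin N => (i : ℕ) + 1)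
  rw [maxVar, hs, Nat.add_right_cancel_iff] at h
  rw [← Fin.ext h]
  exact Finsupp.mem_support_iff.1 hi

lemma maxVar_add_single (w : Mono N) (k : Fin N) :
    maxVar (w + Finsupp.single k 1) = max (maxVar w) ((k : ℕ) + 1) := by
  classical
  rw [maxVar, Finsupp.support_add_eq_union, Finset.sup_union, Finsupp.support_single _
    one_ne_zero, Finset.sup_singleton]
  rfl

lemma lexGT_add_right {u v w : Mono N} : LexGT (u + w) (v + w) ↔ LexGT u v := by
  simp only [LexGT, Finsupp.coe_add, Pi.add_apply, Nat.add_lt_add_iff_right,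
    Nat.add_right_cancel_iff]

lemma lexGT_asymm {u v : Mono N} (h : LexGT u v) : ¬ LexGT v u := by
  rintro ⟨i, hi, hj⟩
  obtain ⟨i', hi', hj'⟩ := h
  rcases lt_trichotomy i i' with hc | rfl | hc
  · have := hj' i hc; omega
  · omega
  · have := hj i' hc; omega

lemma sub_single_add {u : Mono N} {k : Fin N} (h : u k ≠ 0) :
    u - Finsupp.single k 1 + Finsupp.single k 1 = u :=
  tsub_add_cancel_of_le (Finsupp.single_le_iff.2 (Nat.one_le_iff_ne_zero.2 h))

end Monomials

section Lists

lemma sum_count_eq_length {N : ℕ} {L : List ℕ} (hL : ∀ m ∈ L, m < N) :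
    ∑ i : Fin N, L.count (i : ℕ) = L.length := by
  induction L with
  | nil => simp
  | cons a L ih =>
    have ha : a < N := hL a List.mem_cons_self
    simp only [List.count_cons, beq_iff_eq, Finset.sum_add_distrib, List.length_cons]
    rw [ih fun m hm => hL m (List.mem_cons_of_mem a hm)]
    congr 1
    rw [Finset.sum_eq_single ⟨a, ha⟩ (fun i _ hi => if_neg fun h => hi (Fin.ext h.symm))
      (by simp)]
    exact if_pos rfl

lemma add_sub_le_getElem_of_pairwise_lt {s : List ℕ} (hs : s.Pairwise (· < ·)) {a b : ℕ}
    (hab : a ≤ b) (hb : b < s.length) : s[a] + (b - a) ≤ s[b] := by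
  induction b with
  | zero => simp [Nat.le_zero.1 hab]
  | succ b ih =>
    rcases hab.eq_or_lt with rfl | hlt
    · simp
    · have := ih (by omega) (by omega)
      have := List.pairwise_iff_getElem.1 hs b (b + 1) (by omega) hb (by omega)
      omega

lemma getElem_mono_of_pairwise {L : List ℕ} (hL : L.Pairwise (· ≤ ·)) {a b : ℕ}
    (hb : b < L.length) (hab : a ≤ b) : L[a] ≤ L[b] :=
  hL.rel_get_of_le (a := ⟨a, by omega⟩) (b := ⟨b, hb⟩) hab

lemma pairwise_set_of_le {L : List ℕ} (hL : L.Pairwise (· ≤ ·)) {t x : ℕ}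
    (ht : t < L.length) (hx : x ≤ L[t]) (hbef : ∀ s (hs : s < t), L[s] ≤ x) :
    (L.set t x).Pairwise (· ≤ ·) := by
  rw [List.pairwise_iff_getElem]
  intro a b ha hb hab
  simp only [List.length_set] at ha hb
  simp only [List.getElem_set]
  split_ifs with h1 h2 h2
  · rfl
  · exact hx.trans (getElem_mono_of_pairwise hL hb (by omega))
  · exact hbef a (by omega)
  · exact getElem_mono_of_pairwise hL hb hab.le

lemma length_filter_zipIdx_eq_count (l : List ℕ) (i : ℕ) :
    (l.zipIdx.filter fun p => decide (p.2 + p.1 = i)).length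
      = (l.mapIdx fun t a => t + a).count i := by
  rw [List.mapIdx_eq_zipIdx_map, List.count, List.countP_map, List.countP_eq_length_filter]
  congr 2

end Lists

section VarList

variable {N : ℕ}

def IsVarList (w : Mono N) (L : List ℕ) : Prop :=
  L.Pairwise (· ≤ ·) ∧ (∀ m ∈ L, m < N) ∧ ∀ i : Fin N, w i = L.count (i : ℕ)

namespace IsVarList

variable {w w' : Mono N} {L L' : List ℕ}

lemma length_eq (h : IsVarList w L) : L.length = mdeg w := by
  rw [mdeg_eq_sum, ← sum_count_eq_length h.2.1]
  exact Finset.sum_congr rfl fun i _ => (h.2.2 i).symm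

lemma unique (h : IsVarList w L) (h' : IsVarList w L') : L = L' := by
  refine List.Perm.eq_of_pairwise' h.1 h'.1 (List.perm_iff_count.2 fun a => ?_)
  by_cases ha : a < N
  · rw [← h.2.2 ⟨a, ha⟩, h'.2.2 ⟨a, ha⟩]
  · rw [List.count_eq_zero.2 fun hm => ha (h.2.1 a hm),
      List.count_eq_zero.2 fun hm => ha (h'.2.1 a hm)]

lemma eq_of_isVarList (h : IsVarList w L) (h' : IsVarList w' L) : w = w' :=
  Finsupp.ext fun i => by rw [h.2.2 i, h'.2.2 i]

lemma mem_iff (h : IsVarList w L) (i : Fin N) : (i : ℕ) ∈ L ↔ w i ≠ 0 := by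
  rw [h.2.2 i, ← List.count_pos_iff, Nat.pos_iff_ne_zero]

lemma maxVar_eq (h : IsVarList w L) (hL : L ≠ []) : maxVar w = L.getLast hL + 1 := by
  have hlast : L.length - 1 < L.length := by
    have := List.length_pos_iff.2 hL
    omega
  refine le_antisymm (maxVar_le_iff.2 fun i hi => ?_) ?_
  · obtain ⟨s, hs, hsi⟩ := List.mem_iff_getElem.1 ((h.mem_iff i).2 hi)
    rw [List.getLast_eq_getElem, ← hsi]
    exact Nat.add_le_add_right (getElem_mono_of_pairwise h.1 hlast (by omega)) 1
  · have hmem := List.getLast_mem hL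
    exact le_maxVar (i := ⟨_, h.2.1 _ hmem⟩) ((h.mem_iff _).1 hmem)

lemma count_drop_eq_zero (h : IsVarList w L) {t j : ℕ} (ht : t < L.length) (hj : j < L[t]) :
    (L.drop t).count j = 0 := by
  rw [List.count_eq_zero]
  intro hmem
  obtain ⟨s, hs, rfl⟩ := List.mem_iff_getElem.1 hmem
  rw [List.getElem_drop] at hj
  have := getElem_mono_of_pairwise h.1 (a := t) (b := t + s) (by simp at hs; omega) (by omega)
  omega

lemma lexGT_of_lt (h : IsVarList w L) (h' : IsVarList w' L')
    (hlen : L.length = L'.length) (hlt : L < L') : LexGT w w' := by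
  obtain ⟨-, hlen'⟩ | ⟨t, h1, h2, hpre, hlt⟩ := List.lt_iff_exists.1 hlt
  · omega
  have htake : L.take t = L'.take t :=
    List.ext_getElem (by simp; omega) fun s hs _ => by
      simp only [List.getElem_take]
      exact hpre s (by simp at hs; omega)
  have hsplit : ∀ j : Fin N, w j = (L.take t).count (j : ℕ) + (L.drop t).count (j : ℕ) ∧
      w' j = (L.take t).count (j : ℕ) + (L'.drop t).count (j : ℕ) := fun j => by
    rw [h.2.2, h'.2.2, htake, ← List.count_append, ← List.count_append,
      List.take_append_drop, ← htake, List.take_append_drop]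
    exact ⟨rfl, rfl⟩
  have ha : L[t] < N := h.2.1 _ (List.getElem_mem _)
  refine ⟨⟨L[t], ha⟩, ?_, fun j hj => ?_⟩
  · have hpos : 0 < (L.drop t).count L[t] :=
      List.count_pos_iff.2 (List.mem_iff_getElem.2 ⟨0, by simp; omega, by simp⟩)
    have := h'.count_drop_eq_zero h2 hlt
    obtain ⟨e, e'⟩ := hsplit ⟨L[t], ha⟩
    dsimp only at e e'
    omega
  · have hj : (j : ℕ) < L[t] := hj
    have := h.count_drop_eq_zero h1 hj
    have := h'.count_drop_eq_zero h2 (hj.trans hlt)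
    have := hsplit j
    omega

lemma lexGT_iff (h : IsVarList w L) (h' : IsVarList w' L')
    (hlen : L.length = L'.length) : LexGT w w' ↔ L < L' := by
  refine ⟨fun hgt => ?_, h.lexGT_of_lt h' hlen⟩
  rcases lt_trichotomy L L' with hlt | rfl | hgt'
  · exact hlt
  · obtain ⟨i, hi, -⟩ := hgt
    rw [h.eq_of_isVarList h'] at hi
    exact absurd hi (lt_irrefl _)
  · exact absurd (h'.lexGT_of_lt h hlen.symm hgt') (lexGT_asymm hgt)

end IsVarList

end VarList

section Phi

variable {d : ℕ}

def varList (u : Mono n) : List ℕ :=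
  (List.finRange n).flatMap fun i => List.replicate (u i) (i : ℕ)

lemma isVarList_varList (u : Mono n) : IsVarList u (varList u) := by
  refine ⟨?_, fun m hm => ?_, fun i => ?_⟩
  · rw [varList, List.pairwise_flatMap]
    refine ⟨fun a _ => List.pairwise_replicate.2 (Or.inr le_rfl), ?_⟩
    refine (List.pairwise_lt_finRange n).imp_of_mem fun _ _ hab x hx y hy => ?_
    rw [List.eq_of_mem_replicate hx, List.eq_of_mem_replicate hy]
    exact le_of_lt hab
  · obtain ⟨i, _, hm⟩ := List.mem_flatMap.1 hm
    rw [List.eq_of_mem_replicate hm]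
    exact i.2
  · rw [varList, List.count_flatMap, ← List.ofFn_eq_map, List.sum_ofFn,
      Finset.sum_eq_single i (fun j _ hj => ?_) (by simp)]
    · simp
    · simp [List.count_replicate, Fin.val_inj, hj]

lemma length_varList (u : Mono n) : (varList u).length = mdeg u :=
  (isVarList_varList u).length_eq

/-- The (0-indexed) variables of `Φ(u)`: the `t`-th variable `i_t` of `u` becomes `i_t + t`. -/
def posList (u : Mono n) : List ℕ := (varList u).mapIdx fun t a => t + a

noncomputable def phi (d : ℕ) (u : Mono n) : Mono (n + d - 1) :=
  Finsupp.equivFunOnFinite.symm fun i => (posList u).count (i : ℕ)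

lemma phi_apply (u : Mono n) (i : Fin (n + d - 1)) : phi d u i = (posList u).count (i : ℕ) :=
  rfl

lemma phiRel_iff {u : Mono n} {w : Mono (n + d - 1)} :
    PhiRel u w ↔ mdeg u = d ∧ w = phi d u := by
  constructor
  · rintro ⟨l, hs, hlen, hlt, hc, hw⟩
    have hl : l = varList u :=
      IsVarList.unique ⟨List.isChain_iff_pairwise.1 hs, hlt, hc⟩ (isVarList_varList u)
    refine ⟨by rw [← length_varList, ← hl, hlen], Finsupp.ext fun i => ?_⟩
    rw [hw i, length_filter_zipIdx_eq_count, hl]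
    rfl
  · rintro ⟨hd, rfl⟩
    obtain ⟨hs, hlt, hc⟩ := isVarList_varList u
    exact ⟨varList u, List.isChain_iff_pairwise.2 hs, by rw [length_varList, hd], hlt, hc,
      fun i => by rw [length_filter_zipIdx_eq_count]; rfl⟩

lemma length_posList (u : Mono n) : (posList u).length = mdeg u := by
  rw [posList, List.length_mapIdx, length_varList]

lemma posList_pairwise_lt (u : Mono n) : (posList u).Pairwise (· < ·) := by
  rw [List.pairwise_iff_getElem]
  intro s t hs ht hst
  simp only [posList, List.getElem_mapIdx]
  have := getElem_mono_of_pairwise (isVarList_varList u).1 (a := s)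
    (by simpa [posList] using ht) hst.le
  omega

lemma isVarList_phi {u : Mono n} (hu : mdeg u = d) : IsVarList (phi d u) (posList u) := by
  refine ⟨(posList_pairwise_lt u).imp le_of_lt, fun m hm => ?_, fun i => rfl⟩
  obtain ⟨t, ht, rfl⟩ := List.mem_iff_getElem.1 hm
  have hlt := (isVarList_varList u).2.1 _ (List.getElem_mem (l := varList u)
    (by simpa [posList] using ht))
  rw [length_posList] at ht
  simp only [posList, List.getElem_mapIdx]
  omega

lemma phi_ne_zero_iff {u : Mono n} {i : Fin (n + d - 1)} :
    phi d u i ≠ 0 ↔ (i : ℕ) ∈ posList u := by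
  rw [phi_apply, ← List.count_pos_iff, Nat.pos_iff_ne_zero]

lemma sqFree_phi (u : Mono n) : SqFree (phi d u) := fun _ =>
  List.nodup_iff_count_le_one.1 (posList_pairwise_lt u).nodup _

lemma mdeg_phi {u : Mono n} (hu : mdeg u = d) : mdeg (phi d u) = d := by
  rw [← (isVarList_phi hu).length_eq, length_posList, hu]

lemma maxVar_phi {u : Mono n} (hu : mdeg u = d) (hd : 0 < d) :
    maxVar (phi d u) = maxVar u + (d - 1) := by
  have hne : varList u ≠ [] := List.ne_nil_of_length_pos (by rw [length_varList]; omega)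
  rw [(isVarList_phi hu).maxVar_eq (by simpa [posList] using hne),
    (isVarList_varList u).maxVar_eq hne]
  simp only [posList, List.getLast_mapIdx, length_varList, hu]
  omega

lemma posList_lt_posList_iff {u u' : Mono n} (h : mdeg u = mdeg u') :
    posList u < posList u' ↔ varList u < varList u' := by
  have hlen : (varList u).length = (varList u').length := by rw [length_varList, length_varList, h]
  simp [posList, List.lt_iff_exists, List.getElem_mapIdx, hlen]

lemma lexGT_phi_iff {u u' : Mono n} (hu : mdeg u = d) (hu' : mdeg u' = d) :
    LexGT (phi d u) (phi d u') ↔ LexGT u u' := by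
  have hpos : (posList u).length = (posList u').length := by
    rw [length_posList, length_posList, hu, hu']
  have hvar : (varList u).length = (varList u').length := by
    rw [length_varList, length_varList, hu, hu']
  rw [(isVarList_phi hu).lexGT_iff (isVarList_phi hu') hpos,
    posList_lt_posList_iff (hu.trans hu'.symm),
    (isVarList_varList u).lexGT_iff (isVarList_varList u') hvar]

lemma phi_inj {u u' : Mono n} (hu : mdeg u = d) (hu' : mdeg u' = d)
    (h : phi d u = phi d u') : u = u' := by
  have hpos : posList u = posList u' := (isVarList_phi hu).unique (h ▸ isVarList_phi hu')
  have hvar : varList u = varList u' := by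
    refine List.ext_getElem (by rw [length_varList, length_varList, hu, hu']) fun t h1 h2 => ?_
    have := congrArg (fun L : List ℕ => L[t]?) hpos
    simp [posList, List.getElem?_mapIdx, List.getElem?_eq_getElem h1,
      List.getElem?_eq_getElem h2] at this
    exact this
  exact (isVarList_varList u).eq_of_isVarList (hvar ▸ isVarList_varList u')

end Phi

section Exchange

lemma exchange_apply {N : ℕ} (u : Mono N) (p q i : Fin N) :
    (u - Finsupp.single q 1 + Finsupp.single p 1 : Mono N) i
      = u i - (if q = i then 1 else 0) + (if p = i then 1 else 0) := by
  classical
  rw [Finsupp.add_apply, Finsupp.tsub_apply, Finsupp.single_apply, Finsupp.single_apply]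

lemma IsVarList.exchange {N : ℕ} {w : Mono N} {L : List ℕ} (h : IsVarList w L) {p q : Fin N}
    (hpq : p ≤ q) {t : ℕ} (ht : t < L.length) (hget : L[t] = q)
    (hbef : ∀ s (hs : s < t), L[s] ≤ p) :
    IsVarList (w - Finsupp.single q 1 + Finsupp.single p 1) (L.set t p) := by
  refine ⟨pairwise_set_of_le h.1 ht (hget ▸ hpq) hbef, fun m hm => ?_, fun i => ?_⟩
  · rcases List.mem_or_eq_of_mem_set hm with hm | rfl
    exacts [h.2.1 m hm, p.2]
  · rw [exchange_apply, List.count_set ht, h.2.2 i, hget]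
    simp only [beq_iff_eq, Fin.val_inj]

variable {d : ℕ}

lemma phi_exchange {u : Mono n} {p q : Fin n} (hpq : (p : ℕ) + 1 = q)
    {t : ℕ} (ht : t < (varList u).length) (hget : (varList u)[t] = q)
    (hbef : ∀ s (hs : s < t), (varList u)[s] < q) {j j' : Fin (n + d - 1)}
    (hj : (j : ℕ) = t + q) (hj' : (j' : ℕ) = t + p) :
    phi d (u - Finsupp.single q 1 + Finsupp.single p 1)
      = phi d u - Finsupp.single j 1 + Finsupp.single j' 1 := by
  have hvar : varList (u - Finsupp.single q 1 + Finsupp.single p 1) = (varList u).set t p :=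
    ((isVarList_varList u).exchange (Fin.le_def.2 (by omega)) ht hget
      fun s hs => by have := hbef s hs; omega).unique (isVarList_varList _) |>.symm
  have hpos : posList (u - Finsupp.single q 1 + Finsupp.single p 1)
      = (posList u).set t (t + p) := by
    rw [posList, hvar, List.mapIdx_set]
    rfl
  ext i
  rw [phi_apply, hpos, List.count_set (by simpa [posList] using ht), exchange_apply, phi_apply]
  simp only [posList, List.getElem_mapIdx, hget, beq_iff_eq, Fin.ext_iff, hj, hj']

lemma exists_phi_exchange {u : Mono n} (hu : mdeg u = d) {p q : Fin n}
    (hpq : (p : ℕ) + 1 = q) (hq : u q ≠ 0) :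
    ∃ j j' : Fin (n + d - 1), (j' : ℕ) + 1 = j ∧ phi d u j ≠ 0 ∧ phi d u j' = 0 ∧
      phi d (u - Finsupp.single q 1 + Finsupp.single p 1)
        = phi d u - Finsupp.single j 1 + Finsupp.single j' 1 := by
  have hL := isVarList_varList u
  set t := (varList u).idxOf (q : ℕ)
  have ht : t < (varList u).length := List.idxOf_lt_length_iff.2 ((hL.mem_iff q).2 hq)
  have hget : (varList u)[t] = q := List.getElem_idxOf ht
  have hbef : ∀ s (hs : s < t), (varList u)[s] < q := fun s hs =>
    lt_of_le_of_ne (hget ▸ getElem_mono_of_pairwise hL.1 ht hs.le)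
      (by simpa using List.not_of_lt_findIdx hs)
  have hmem : t + q ∈ posList u :=
    List.mem_iff_getElem.2 ⟨t, by simpa [posList] using ht, by simp [posList, hget]⟩
  have hjlt : t + q < n + d - 1 := (isVarList_phi hu).2.1 _ hmem
  refine ⟨⟨t + q, hjlt⟩, ⟨t + p, by omega⟩, by simp only; omega, phi_ne_zero_iff.2 hmem, ?_,
    phi_exchange hpq ht hget hbef rfl rfl⟩
  by_contra h
  obtain ⟨s, hs, hseq⟩ := List.mem_iff_getElem.1 (phi_ne_zero_iff.1 h)
  simp only [posList, List.getElem_mapIdx, List.length_mapIdx] at hs hseq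
  rcases lt_trichotomy s t with hst | rfl | hst
  · have := hbef s hst
    omega
  · omega
  · have := getElem_mono_of_pairwise hL.1 hs hst.le
    omega

lemma exists_exchange_of_phi {u : Mono n} {j j' : Fin (n + d - 1)}
    (hjj : (j' : ℕ) + 1 = j) (hj : phi d u j ≠ 0) (hj' : phi d u j' = 0) :
    ∃ p q : Fin n, (p : ℕ) + 1 = q ∧ u q ≠ 0 ∧
      phi d (u - Finsupp.single q 1 + Finsupp.single p 1)
        = phi d u - Finsupp.single j 1 + Finsupp.single j' 1 := by
  have hL := isVarList_varList u
  obtain ⟨t, htP, hjt⟩ := List.mem_iff_getElem.1 (phi_ne_zero_iff.1 hj)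
  have ht : t < (varList u).length := by simpa [posList] using htP
  simp only [posList, List.getElem_mapIdx] at hjt
  -- `j - 1 ∉ Φ(u)` forces the entries of `varList u` before position `t` to be smaller
  have hbef : ∀ s (hs : s < t), (varList u)[s] < (varList u)[t] := by
    intro s hs
    have h1 := getElem_mono_of_pairwise hL.1 (a := s) (b := t - 1) (by omega) (by omega)
    have h2 : t - 1 + (varList u)[t - 1] ≠ j' := fun h =>
      phi_ne_zero_iff.2 (List.mem_iff_getElem.2
        ⟨t - 1, by simp [posList]; omega, by simp [posList, h]⟩) hj'
    have h3 := List.pairwise_iff_getElem.1 (posList_pairwise_lt u) (t - 1) t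
      (by simp [posList]; omega) htP (by omega)
    simp only [posList, List.getElem_mapIdx] at h3
    omega
  have hq1 : 1 ≤ (varList u)[t] := by
    rcases Nat.eq_zero_or_pos t with rfl | hpos
    · omega
    · have := hbef (t - 1) (by omega)
      omega
  have hqn : (varList u)[t] < n := hL.2.1 _ (List.getElem_mem ht)
  refine ⟨⟨(varList u)[t] - 1, by omega⟩, ⟨(varList u)[t], hqn⟩, by simp only; omega,
    (hL.mem_iff ⟨(varList u)[t], hqn⟩).1 (List.getElem_mem ht),
    phi_exchange (by simp only; omega) ht rfl hbef (by simp only; omega) (by simp only; omega)⟩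

end Exchange

lemma exists_phi_eq {d : ℕ} {w : Mono (n + d - 1)} (hw : SqFree w) (hdeg : mdeg w = d) :
    ∃ u : Mono n, mdeg u = d ∧ phi d u = w := by
  classical
  set S : List ℕ := (w.support.sort (· ≤ ·)).map Fin.val
  have hSlt : S.Pairwise (· < ·) := by
    rw [List.pairwise_map]
    exact (Finset.sortedLT_sort w.support).pairwise.imp fun h => by exact_mod_cast h
  have hmemS : ∀ i : Fin (n + d - 1), (i : ℕ) ∈ S ↔ w i ≠ 0 := fun i => by
    simp [S, Fin.val_inj]
  have hS : IsVarList w S := by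
    refine ⟨hSlt.imp le_of_lt, fun m hm => ?_, fun i => ?_⟩
    · obtain ⟨i, -, rfl⟩ := List.mem_map.1 hm
      exact i.2
    · by_cases hi : w i = 0
      · rw [hi, List.count_eq_zero.2 fun h => (hmemS i).1 h hi]
      · rw [List.count_eq_one_of_mem hSlt.nodup ((hmemS i).2 hi)]
        have := hw i
        omega
  have hlen : S.length = d := hS.length_eq.trans hdeg
  -- the preimage has the variables `S[t] - t`, sorted and `< n` as `S` strictly increases
  have hge : ∀ t (ht : t < S.length), t ≤ S[t] := fun t ht => by
    have := add_sub_le_getElem_of_pairwise_lt hSlt (Nat.zero_le t) ht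
    omega
  set l := S.mapIdx fun t a => a - t
  set u : Mono n := Finsupp.equivFunOnFinite.symm fun i : Fin n => l.count (i : ℕ)
  have hl : IsVarList u l := by
    refine ⟨List.pairwise_iff_getElem.2 fun a b ha hb hab => ?_, fun m hm => ?_, fun i => rfl⟩
    · simp only [l, List.getElem_mapIdx]
      have := add_sub_le_getElem_of_pairwise_lt hSlt hab.le (by simpa [l] using hb)
      omega
    · obtain ⟨t, ht, rfl⟩ := List.mem_iff_getElem.1 hm
      simp only [l, List.length_mapIdx] at ht ⊢
      have hlast : S.length - 1 < S.length := by omega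
      have h1 := add_sub_le_getElem_of_pairwise_lt hSlt (a := t) (by omega) hlast
      have h2 := hS.2.1 _ (List.getElem_mem hlast)
      have h3 := hge t ht
      simp only [List.getElem_mapIdx]
      omega
  have hmdeg : mdeg u = d := by rw [← hl.length_eq, List.length_mapIdx, hlen]
  have hpos : posList u = S := by
    rw [posList, (isVarList_varList u).unique hl]
    refine List.ext_getElem (by simp [l]) fun t h1 h2 => ?_
    have := hge t h2
    simp only [l, List.getElem_mapIdx]
    omega
  exact ⟨u, hmdeg, (isVarList_phi hmdeg).eq_of_isVarList (hpos ▸ hS)⟩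

section Segments

variable {N : ℕ}

lemma maxVar_mono {u v : Mono N} (h : v ≤ u) : maxVar v ≤ maxVar u :=
  Finset.sup_mono (Finsupp.support_mono h)

lemma apply_eq_zero_of_maxVar_le {u : Mono N} {k : Fin N} (h : maxVar u ≤ k) : u k = 0 := by
  by_contra hk
  have := le_maxVar hk
  omega

lemma maxVar_le_of_apply_eq_zero {u : Mono N} {k : Fin N} (h : maxVar u ≤ (k : ℕ) + 1)
    (hk : u k = 0) : maxVar u ≤ k :=
  maxVar_le_iff.2 fun i hi => by
    have := le_maxVar hi
    have : i ≠ k := fun h => hi (h ▸ hk)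
    have : (i : ℕ) ≠ k := Fin.val_ne_of_ne this
    omega

lemma maxVar_sub_single_le {x : Mono N} {k : Fin N} (hx : SqFree x)
    (hmax : maxVar x ≤ (k : ℕ) + 1) : maxVar (x - Finsupp.single k 1) ≤ k := by
  refine maxVar_le_of_apply_eq_zero ((maxVar_mono tsub_le_self).trans hmax) ?_
  have := hx k
  simp only [Finsupp.tsub_apply, Finsupp.single_eq_same]
  omega

lemma mdeg_sub_single {u : Mono N} {k : Fin N} (hk : u k ≠ 0) :
    mdeg (u - Finsupp.single k 1) + 1 = mdeg u := by
  conv_rhs => rw [← sub_single_add hk]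
  rw [mdeg_add, mdeg_single]

lemma mdeg_exchange {u : Mono N} {p q : Fin N} (hq : u q ≠ 0) :
    mdeg (u - Finsupp.single q 1 + Finsupp.single p 1) = mdeg u := by
  rw [mdeg_add, mdeg_single, mdeg_sub_single hq]

lemma SqFree.anti {u v : Mono N} (hu : SqFree u) (h : v ≤ u) : SqFree v :=
  fun i => (h i).trans (hu i)

lemma SqFree.add_single {u : Mono N} (hu : SqFree u) {k : Fin N} (hk : u k = 0) :
    SqFree (u + Finsupp.single k 1) := by
  classical
  intro i
  rw [Finsupp.add_apply, Finsupp.single_apply]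
  split_ifs with h
  · rw [← h, hk]
  · exact hu i

lemma mem_Dk_iff {V : Set (Mono N)} {k : Fin N} {w : Mono N} :
    w ∈ Dk V k ↔ w + Finsupp.single k 1 ∈ V ∧ maxVar w ≤ (k : ℕ) + 1 := by
  simp only [Dk, Set.mem_ofPred_eq, maxVar_add_single, max_eq_right_iff]

lemma lexSegIn_Dk_iff {V : Set (Mono N)} {d : ℕ} (hV : ∀ u ∈ V, mdeg u = d) (k : Fin N) :
    LexSegIn ((k : ℕ) + 1) (Dk V k) ↔
      ∀ u ∈ V, maxVar u = (k : ℕ) + 1 → ∀ v : Mono N, mdeg v = d →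
        maxVar v = (k : ℕ) + 1 → LexGT v u → v ∈ V := by
  constructor
  · intro hL u hu hmax v hdeg hvmax hgt
    have hk := apply_ne_zero_of_maxVar_eq hmax
    have hvk := apply_ne_zero_of_maxVar_eq hvmax
    have hD : u - Finsupp.single k 1 ∈ Dk V k :=
      mem_Dk_iff.2 ⟨by rwa [sub_single_add hk], (maxVar_mono tsub_le_self).trans hmax.le⟩
    have hdeg' := mdeg_sub_single hk
    have hvdeg' := mdeg_sub_single hvk
    have hv := hL.2 _ hD (v - Finsupp.single k 1) (by rw [hV u hu] at hdeg'; omega)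
      ((maxVar_mono tsub_le_self).trans hvmax.le)
      (by rwa [← lexGT_add_right, sub_single_add hk, sub_single_add hvk])
    rw [← sub_single_add hvk]
    exact (mem_Dk_iff.1 hv).1
  · intro hP
    refine ⟨fun w hw => (mem_Dk_iff.1 hw).2, fun w hw v hdeg hvmax hgt => ?_⟩
    have hwdeg := hV _ hw.1
    rw [mdeg_add, mdeg_single] at hwdeg
    refine mem_Dk_iff.2 ⟨hP _ hw.1 hw.2 _ ?_ ?_ (lexGT_add_right.2 hgt), hvmax⟩
    · rw [mdeg_add, mdeg_single]
      omega
    · rw [maxVar_add_single, max_eq_right hvmax]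

lemma sqLexSegIn_Dk_iff {W : Set (Mono N)} {d : ℕ} (hW : ∀ w ∈ W, mdeg w = d ∧ SqFree w)
    (k : Fin N) :
    SqLexSegIn (k : ℕ) (Dk W k) ↔
      ∀ w ∈ W, maxVar w = (k : ℕ) + 1 → ∀ v : Mono N, SqFree v → mdeg v = d →
        maxVar v = (k : ℕ) + 1 → LexGT v w → v ∈ W := by
  constructor
  · intro hL w hw hmax v hsq hdeg hvmax hgt
    have hk := apply_ne_zero_of_maxVar_eq hmax
    have hvk := apply_ne_zero_of_maxVar_eq hvmax
    have hD : w - Finsupp.single k 1 ∈ Dk W k :=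
      mem_Dk_iff.2 ⟨by rwa [sub_single_add hk], (maxVar_mono tsub_le_self).trans hmax.le⟩
    have hdeg' := mdeg_sub_single hk
    have hvdeg' := mdeg_sub_single hvk
    have hv := hL.2 _ hD (v - Finsupp.single k 1) (hsq.anti tsub_le_self)
      (by rw [(hW w hw).1] at hdeg'; omega) (maxVar_sub_single_le hsq hvmax.le)
      (by rwa [← lexGT_add_right, sub_single_add hk, sub_single_add hvk])
    rw [← sub_single_add hvk]
    exact (mem_Dk_iff.1 hv).1
  · intro hP
    have hD : ∀ w ∈ Dk W k, SqFree w ∧ maxVar w ≤ k := fun w hw => by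
      have hsq := (hW _ hw.1).2
      have hwk : w k = 0 := by
        have := hsq k
        simp only [Finsupp.add_apply, Finsupp.single_eq_same] at this
        omega
      exact ⟨hsq.anti le_self_add, maxVar_le_of_apply_eq_zero (mem_Dk_iff.1 hw).2 hwk⟩
    refine ⟨hD, fun w hw v hsq hdeg hvmax hgt => ?_⟩
    have hwdeg := (hW _ hw.1).1
    rw [mdeg_add, mdeg_single] at hwdeg
    have hvk := apply_eq_zero_of_maxVar_le hvmax
    refine mem_Dk_iff.2 ⟨hP _ hw.1 hw.2 _ (hsq.add_single hvk) ?_ ?_ (lexGT_add_right.2 hgt),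
      by omega⟩
    · rw [mdeg_add, mdeg_single]
      omega
    · rw [maxVar_add_single, max_eq_right (by omega)]

end Segments

section Stability

variable {N : ℕ}

def SqSStableSet (W : Set (Mono N)) : Prop :=
  ∀ w ∈ W, ∀ p q : Fin N, p < q → w q ≠ 0 → w p = 0 →
    w - Finsupp.single q 1 + Finsupp.single p 1 ∈ W

lemma sStableSet_iff {V : Set (Mono N)} :
    SStableSet V ↔ ∀ u ∈ V, ∀ p q : Fin N, p < q → u q ≠ 0 →
      u - Finsupp.single q 1 + Finsupp.single p 1 ∈ V := by
  refine ⟨fun h u hu p q hpq hq => h _ p q hpq (by rwa [sub_single_add hq]),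
    fun h u p q hpq hu => ?_⟩
  have hq : (u + Finsupp.single q 1 : Mono N) q ≠ 0 := by simp
  simpa using h _ hu p q hpq hq

lemma exchange_trans (w : Mono N) (p q q' : Fin N) :
    w - Finsupp.single q 1 + Finsupp.single q' 1 - Finsupp.single q' 1 + Finsupp.single p 1
      = w - Finsupp.single q 1 + Finsupp.single p 1 := by
  simp

lemma exchange_trans_swap (w : Mono N) {p q q' : Fin N} (hq' : w q' ≠ 0) (hpq' : p ≠ q')
    (hqq' : q ≠ q') (hpq : p ≠ q) :
    w - Finsupp.single q' 1 + Finsupp.single p 1 - Finsupp.single q 1 + Finsupp.single q' 1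
      = w - Finsupp.single q 1 + Finsupp.single p 1 := by
  ext i
  simp only [exchange_apply]
  by_cases hi : q' = i
  · subst hi
    simp only [if_neg hpq', if_neg hqq', if_true]
    omega
  · simp only [if_neg hi]
    split_ifs with h h' <;> [exact absurd (h.trans h'.symm) hpq; omega; omega; omega]

lemma sStableSet_of_adjacent {V : Set (Mono N)}
    (h : ∀ u ∈ V, ∀ p q : Fin N, (p : ℕ) + 1 = q → u q ≠ 0 →
      u - Finsupp.single q 1 + Finsupp.single p 1 ∈ V) :
    SStableSet V := by
  refine sStableSet_iff.2 fun u hu p q hpq hq => ?_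
  obtain ⟨k, hk⟩ : ∃ k, (q : ℕ) = p + 1 + k := ⟨q - (p + 1), by rw [Fin.lt_def] at hpq; omega⟩
  induction k generalizing u q with
  | zero => exact h u hu p q hk.symm hq
  | succ k ih =>
    set q' : Fin N := ⟨q - 1, by omega⟩
    have := ih _ (h u hu q' q (by simp [q']; omega) hq) q' (by simp [Fin.lt_def, q']; omega)
      (by simp [exchange_apply]) (by simp [q']; omega)
    rwa [exchange_trans] at this

lemma sqSStableSet_of_adjacent {W : Set (Mono N)} (hW : ∀ w ∈ W, SqFree w)
    (h : ∀ w ∈ W, ∀ p q : Fin N, (p : ℕ) + 1 = q → w q ≠ 0 → w p = 0 →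
      w - Finsupp.single q 1 + Finsupp.single p 1 ∈ W) :
    SqSStableSet W := by
  intro w hw p q hpq hq hp
  obtain ⟨k, hk⟩ : ∃ k, (q : ℕ) = p + 1 + k := ⟨q - (p + 1), by rw [Fin.lt_def] at hpq; omega⟩
  induction k generalizing w q with
  | zero => exact h w hw p q hk.symm hq hp
  | succ k ih =>
    set q' : Fin N := ⟨q - 1, by omega⟩
    have hq'q : (q' : ℕ) + 1 = q := by simp [q']; omega
    have hpq' : p < q' := by simp [Fin.lt_def, q']; omega
    have hq'k : (q' : ℕ) = p + 1 + k := by simp [q']; omega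
    have hqq' : q ≠ q' := Fin.ne_of_val_ne (by omega)
    -- if `w q' = 0`, move `q` to `q'` and then `q'` to `p`; otherwise move `q'` to `p` first
    by_cases hwq' : w q' = 0
    · have := ih _ (h w hw q' q hq'q hq hwq') q' hpq' (by simp [exchange_apply])
        (by simp [exchange_apply, hp, (ne_of_lt hpq').symm]) hq'k
      rwa [exchange_trans] at this
    · have h1 := ih w hw q' hpq' hwq' hp hq'k
      have hwq'1 := hW w hw q'
      have := h _ h1 q' q hq'q
        (by rw [exchange_apply, if_neg hqq'.symm, if_neg (ne_of_lt hpq)]; omega)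
        (by simp [exchange_apply, (ne_of_lt hpq')]; omega)
      rwa [exchange_trans_swap w hwq' (ne_of_lt hpq') hqq' (ne_of_lt hpq)] at this

end Stability

section Ideals

variable {N : ℕ}

lemma monomial_mem_span_iff {G : Set (Mono N)} {m : Mono N} :
    monomial m (1 : K) ∈ Ideal.span ((fun w => monomial w (1 : K)) '' G) ↔ ∃ g ∈ G, g ≤ m := by
  classical
  rw [mem_ideal_span_monomial_image, support_monomial, if_neg one_ne_zero]
  simp

lemma monomialIdeal_span (G : Set (Mono N)) :
    MonomialIdeal (Ideal.span ((fun w => monomial w (1 : K)) '' G)) := by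
  classical
  intro p hp m hm
  rw [mem_ideal_span_monomial_image] at hp
  exact monomial_mem_span_iff.2 (hp m hm)

lemma exists_minGen_le {I : Ideal (MvPolynomial (Fin N) K)} {m : Mono N}
    (hm : monomial m (1 : K) ∈ I) : ∃ g, MinGen I g ∧ g ≤ m := by
  obtain ⟨g, ⟨hg, hgm⟩, hmin⟩ :=
    wellFounded_lt.has_min {v : Mono N | monomial v (1 : K) ∈ I ∧ v ≤ m} ⟨m, hm, le_rfl⟩
  exact ⟨g, ⟨hg, fun v hv hne hvI => hmin v ⟨hvI, hv.trans hgm⟩ (lt_of_le_of_ne hv hne)⟩, hgm⟩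

lemma monSlice_eq_minGen {I : Ideal (MvPolynomial (Fin N) K)} {d : ℕ}
    (hgen : ∀ u : Mono N, MinGen I u → mdeg u = d) :
    monSlice I d = {u | MinGen I u} := by
  ext u
  refine ⟨fun ⟨hdeg, hmem⟩ => ?_, fun h => ⟨hgen u h, h.1⟩⟩
  obtain ⟨g, hg, hle⟩ := exists_minGen_le hmem
  rwa [← eq_of_le_of_mdeg_le hle (by rw [hgen g hg, hdeg])]

lemma dLinearLexIdeal_iff {I : Ideal (MvPolynomial (Fin n) K)} {d : ℕ} (hI : MonomialIdeal I)
    (hgen : ∀ u : Mono n, MinGen I u → mdeg u = d) :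
    DLinearLexIdeal d I ↔ SStableSet {u | MinGen I u} ∧
      ∀ k : Fin n, LexSegIn ((k : ℕ) + 1) (Dk {u | MinGen I u} k) := by
  rw [DLinearLexIdeal, DLinearLexSeg, monSlice_eq_minGen hgen]
  exact ⟨fun h => h.2.2.2, fun h => ⟨hI, hgen, hgen, h⟩⟩

variable {W : Set (Mono N)} {d : ℕ}

lemma monSlice_span (hW : ∀ w ∈ W, mdeg w = d) :
    monSlice (Ideal.span ((fun w => monomial w (1 : K)) '' W)) d = W := by
  ext m
  rw [monSlice, Set.mem_ofPred_eq, monomial_mem_span_iff]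
  refine ⟨fun ⟨hdeg, g, hg, hle⟩ => ?_, fun hm => ⟨hW m hm, m, hm, le_rfl⟩⟩
  rwa [← eq_of_le_of_mdeg_le hle (by rw [hW g hg, hdeg])]

lemma minGen_span_iff (hW : ∀ w ∈ W, mdeg w = d) {w : Mono N} :
    MinGen (Ideal.span ((fun w => monomial w (1 : K)) '' W)) w ↔ w ∈ W := by
  simp only [MinGen, monomial_mem_span_iff]
  constructor
  · rintro ⟨⟨g, hg, hle⟩, hmin⟩
    by_contra hw
    exact hmin g hle (fun h => hw (h ▸ hg)) ⟨g, hg, le_rfl⟩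
  · intro hw
    refine ⟨⟨w, hw, le_rfl⟩, fun v hv hne ⟨g, hg, hle⟩ => ?_⟩
    have h1 := mdeg_lt_of_lt (lt_of_le_of_ne hv hne)
    have h2 := mdeg_le_of_le hle
    rw [hW w hw] at h1
    rw [hW g hg] at h2
    omega

lemma le_exchange_of_le {g m : Mono N} (h : g ≤ m) {p q : Fin N} (hq : g q = 0) :
    g ≤ m - Finsupp.single q 1 + Finsupp.single p 1 := by
  refine le_trans (fun i => ?_) le_self_add
  rw [Finsupp.tsub_apply, Finsupp.single_apply]
  split_ifs with hi
  · rw [← hi, hq]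
    exact Nat.zero_le _
  · simpa using h i

lemma sqSStableIdeal_span_iff (hW : ∀ w ∈ W, mdeg w = d ∧ SqFree w) :
    SqSStableIdeal (Ideal.span ((fun w => monomial w (1 : K)) '' W)) ↔ SqSStableSet W := by
  have hdeg : ∀ w ∈ W, mdeg w = d := fun w hw => (hW w hw).1
  constructor
  · intro hJ w hw p q hpq hq hp
    have hmem := hJ.2 w (hW w hw).2 (monomial_mem_span_iff.2 ⟨w, hw, le_rfl⟩) p q hpq
      (by have := (hW w hw).2 q; omega) hp
    rw [← monSlice_span (K := K) hdeg]
    exact ⟨(mdeg_exchange hq).trans (hdeg w hw), hmem⟩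
  · intro hW'
    refine ⟨⟨monomialIdeal_span W, fun u hu => ((hW u ((minGen_span_iff hdeg).1 hu)).2)⟩, ?_⟩
    intro m _ hm p q hpq hq hp
    obtain ⟨g, hg, hle⟩ := monomial_mem_span_iff.1 hm
    refine monomial_mem_span_iff.2 ?_
    by_cases hgq : g q = 0
    · exact ⟨g, hg, le_exchange_of_le hle hgq⟩
    · have hgp : g p = 0 := by have := hle p; omega
      exact ⟨_, hW' g hg p q hpq hgq hgp, add_le_add_left (tsub_le_tsub_right hle _) _⟩

lemma dLinearSqLexIdeal_span_iff (hW : ∀ w ∈ W, mdeg w = d ∧ SqFree w) :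
    DLinearSqLexIdeal d (Ideal.span ((fun w => monomial w (1 : K)) '' W)) ↔
      SqSStableSet W ∧ ∀ k : Fin N, SqLexSegIn (k : ℕ) (Dk W k) := by
  have hdeg : ∀ w ∈ W, mdeg w = d := fun w hw => (hW w hw).1
  rw [DLinearSqLexIdeal, sqSStableIdeal_span_iff hW, monSlice_span hdeg]
  exact ⟨fun h => ⟨h.1, h.2.2⟩,
    fun h => ⟨h.1, fun w hw => hdeg w ((minGen_span_iff hdeg).1 hw), h.2⟩⟩

end Ideals

section Transfer

variable {d : ℕ} {V : Set (Mono n)}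

lemma sStableSet_iff_sqSStableSet_image_phi (hV : ∀ u ∈ V, mdeg u = d) :
    SStableSet V ↔ SqSStableSet (phi d '' V) := by
  constructor
  · refine fun hst => sqSStableSet_of_adjacent (fun _ ⟨u, _, hu⟩ => hu ▸ sqFree_phi u) ?_
    rintro _ ⟨u, hu, rfl⟩ j' j hjj hj hj'
    obtain ⟨p, q, hpq, hq, heq⟩ := exists_exchange_of_phi hjj hj hj'
    exact ⟨_, sStableSet_iff.1 hst u hu p q (Fin.lt_def.2 (by omega)) hq, heq⟩
  · refine fun hsq => sStableSet_of_adjacent fun u hu p q hpq hq => ?_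
    obtain ⟨j, j', hjj, hj, hj', heq⟩ := exists_phi_exchange (hV u hu) hpq hq
    obtain ⟨v, hv, hveq⟩ := hsq _ ⟨u, hu, rfl⟩ j' j (Fin.lt_def.2 (by omega)) hj hj'
    rwa [← phi_inj (hV v hv) ((mdeg_exchange hq).trans (hV u hu)) (hveq.trans heq.symm)]

lemma lexSegIn_iff_sqLexSegIn_image_phi (hd : 0 < d) (hV : ∀ u ∈ V, mdeg u = d) :
    (∀ k : Fin n, LexSegIn ((k : ℕ) + 1) (Dk V k)) ↔
      ∀ k : Fin (n + d - 1), SqLexSegIn (k : ℕ) (Dk (phi d '' V) k) := by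
  have hW : ∀ w ∈ phi d '' V, mdeg w = d ∧ SqFree w := by
    rintro _ ⟨u, hu, rfl⟩
    exact ⟨mdeg_phi (hV u hu), sqFree_phi u⟩
  simp only [lexSegIn_Dk_iff hV, sqLexSegIn_Dk_iff hW]
  constructor
  · rintro hV' k _ ⟨u, hu, rfl⟩ hmax v hsq hvdeg hvmax hgt
    obtain ⟨v, hvd, rfl⟩ := exists_phi_eq hsq hvdeg
    rw [maxVar_phi (hV u hu) hd] at hmax
    rw [maxVar_phi hvd hd] at hvmax
    have := one_le_maxVar (u := u) (by rw [hV u hu]; omega)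
    have := maxVar_le u
    -- `Φ` shifts `max` by `d - 1`, so level `k` of `Φ(V)` comes from level `k + 1 - d` of `V`
    exact ⟨v, hV' ⟨k + 1 - d, by omega⟩ u hu (by simp only; omega) v hvd (by simp only; omega)
      ((lexGT_phi_iff hvd (hV u hu)).1 hgt), rfl⟩
  · intro hW' k u hu hmax v hvd hvmax hgt
    have hk : (k : ℕ) + d - 1 < n + d - 1 := by omega
    obtain ⟨v', hv', hv'eq⟩ := hW' ⟨k + d - 1, hk⟩ _ ⟨u, hu, rfl⟩
      (by rw [maxVar_phi (hV u hu) hd, hmax]; simp only; omega) (phi d v) (sqFree_phi v)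
      (mdeg_phi hvd) (by rw [maxVar_phi hvd hd, hvmax]; simp only; omega)
      ((lexGT_phi_iff hvd (hV u hu)).2 hgt)
    rwa [← phi_inj (hV v' hv') hvd hv'eq]

lemma setOf_phiRel_eq_image {I : Ideal (MvPolynomial (Fin n) K)}
    (hgen : ∀ u : Mono n, MinGen I u → mdeg u = d) :
    {q : MvPolynomial (Fin (n + d - 1)) K | ∃ (u : Mono n) (w : Mono (n + d - 1)),
        MinGen I u ∧ PhiRel u w ∧ q = monomial w (1 : K)}
      = (fun w => monomial w (1 : K)) '' (phi d '' {u | MinGen I u}) := by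
  ext x
  simp only [Set.mem_ofPred_eq, Set.mem_image, phiRel_iff]
  constructor
  · rintro ⟨u, w, hu, ⟨-, rfl⟩, rfl⟩
    exact ⟨phi d u, ⟨u, hu, rfl⟩, rfl⟩
  · rintro ⟨w, ⟨u, hu, rfl⟩, rfl⟩
    exact ⟨u, phi d u, hu, ⟨hgen u hu, rfl⟩, rfl⟩

end Transfer

theorem stmt15_general (n d : ℕ) (hd : 0 < d) (K : Type) [Field K]
    (I : Ideal (MvPolynomial (Fin n) K)) (hI : MonomialIdeal I)
    (hgen : ∀ u : Mono n, MinGen I u → mdeg u = d)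
    (J : Ideal (MvPolynomial (Fin (n + d - 1)) K))
    (hJ : J = Ideal.span {q : MvPolynomial (Fin (n + d - 1)) K |
        ∃ (u : Mono n) (w : Mono (n + d - 1)),
          MinGen I u ∧ PhiRel u w ∧ q = monomial w (1 : K)}) :
    DLinearLexIdeal d I ↔ DLinearSqLexIdeal d J := by
  have hV : ∀ u ∈ {u | MinGen I u}, mdeg u = d := hgen
  have hW : ∀ w ∈ phi d '' {u | MinGen I u}, mdeg w = d ∧ SqFree w := by
    rintro _ ⟨u, hu, rfl⟩
    exact ⟨mdeg_phi (hgen u hu), sqFree_phi u⟩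
  rw [hJ, setOf_phiRel_eq_image hgen, dLinearLexIdeal_iff hI hgen,
    dLinearSqLexIdeal_span_iff hW, sStableSet_iff_sqSStableSet_image_phi hV,
    lexSegIn_iff_sqLexSegIn_image_phi hd hV]

/-- `I` is `d`-linear lexsegment iff `Φ(I)` is `d`-linear squarefree
lexsegment. -/
theorem stmt15 (n d : ℕ) (hn : 0 < n) (hd : 0 < d) (K : Type) [Field K]
    (I : Ideal (MvPolynomial (Fin n) K)) (hI : MonomialIdeal I)
    (hgen : ∀ u : Mono n, MinGen I u → mdeg u = d)
    (J : Ideal (MvPolynomial (Fin (n + d - 1)) K))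
    (hJ : J = Ideal.span {q : MvPolynomial (Fin (n + d - 1)) K |
        ∃ (u : Mono n) (w : Mono (n + d - 1)),
          MinGen I u ∧ PhiRel u w ∧ q = monomial w (1 : K)}) :
    DLinearLexIdeal d I ↔ DLinearSqLexIdeal d J :=
  stmt15_general n d hd K I hI hgen J hJ

end Paper
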